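/- arXiv:1006.0283 — 3 statements merged into one kernel-verified Lean document; each statement's English description precedes it below -/
import Mathlib

section
/- Fix α > 0 and define x = r* - α - √α and f^α(x) = ∫_{-α-√α}^{x} dt/(t^2 + α^2). Then: (i) for -α ≤ x ≤ 0, f^α(x) > (x + α)/(2α^2); (ii) for 0 ≤ x ≤ α, f^α(x) > (x + α)/(x^2 + α^2) - 1/(2α). -/
/-!
Split `f^α(x) = ∫_{-α-√α}^{x} dt/(t²+α²)` at `-α`: the piece over `[-α-√α, -α]` is positive, so it
suffices to bound the integral from `-α` (resp. `0`) below. On `[-α, 0]` the integrand is at least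
`1/(2α²)`, which gives (i). On `[0, x]` the integrand dominates the derivative of
`g(t) = (t+α)/(t²+α²)`, since the difference is `2t(t+α)/(t²+α²)² ≥ 0`; thus the integral over
`[0, x]` is at least `g(x) - g(0) = g(x) - 1/α`, and (i) at `x = 0` contributes more than `1/(2α)`.
-/

open Set intervalIntegral

section

variable {α : ℝ}

lemma continuous_one_div_sq_add_sq (hα : α ≠ 0) : Continuous fun t : ℝ => 1 / (t ^ 2 + α ^ 2) :=
  continuous_const.div (by fun_prop) fun _ => by positivity

lemma integral_one_div_sq_add_sq_pos (hα : α ≠ 0) {a b : ℝ} (hab : a < b) :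
    0 < ∫ t in a..b, 1 / (t ^ 2 + α ^ 2) :=
  intervalIntegral_pos_of_pos_on ((continuous_one_div_sq_add_sq hα).intervalIntegrable a b)
    (fun _ _ => by positivity) hab

lemma sub_le_integral_one_div_sq_add_sq (hα : α ≠ 0) {g g' : ℝ → ℝ} {a b : ℝ} (hab : a ≤ b)
    (hg : ∀ t, HasDerivAt g (g' t) t) (hle : ∀ t ∈ Ioo a b, g' t ≤ 1 / (t ^ 2 + α ^ 2)) :
    g b - g a ≤ ∫ t in a..b, 1 / (t ^ 2 + α ^ 2) :=
  sub_le_integral_of_hasDeriv_right_of_le hab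
    (fun t _ => (hg t).continuousAt.continuousWithinAt) (fun t _ => (hg t).hasDerivWithinAt)
    (continuous_one_div_sq_add_sq hα).integrableOn_Icc hle

lemma one_div_two_mul_sq_le_one_div_sq_add_sq (hα : α ≠ 0) {t : ℝ} (ht : t ^ 2 ≤ α ^ 2) :
    1 / (2 * α ^ 2) ≤ 1 / (t ^ 2 + α ^ 2) :=
  one_div_le_one_div_of_le (by positivity) (by linarith)

lemma hasDerivAt_add_div_sq_add_sq (hα : α ≠ 0) (t : ℝ) :
    HasDerivAt (fun t => (t + α) / (t ^ 2 + α ^ 2))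
      ((α ^ 2 - 2 * α * t - t ^ 2) / (t ^ 2 + α ^ 2) ^ 2) t := by
  refine (((hasDerivAt_id' t).add_const α).fun_div ((hasDerivAt_pow 2 t).add_const (α ^ 2))
    (by positivity)).congr_deriv ?_
  norm_num
  ring

lemma deriv_add_div_sq_add_sq_le (hα : 0 < α) {t : ℝ} (ht : 0 ≤ t) :
    (α ^ 2 - 2 * α * t - t ^ 2) / (t ^ 2 + α ^ 2) ^ 2 ≤ 1 / (t ^ 2 + α ^ 2) := by
  have hden : 0 < t ^ 2 + α ^ 2 := by positivity
  rw [div_le_div_iff₀ (by positivity) hden]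
  nlinarith [mul_nonneg (mul_nonneg ht (by linarith : 0 ≤ t + α)) hden.le]

lemma div_two_mul_sq_lt_integral (hα : 0 < α) {c x : ℝ} (hc : c < -α) (hx₀ : -α ≤ x)
    (hx₁ : x ≤ 0) : (x + α) / (2 * α ^ 2) < ∫ t in c..x, 1 / (t ^ 2 + α ^ 2) := by
  have hcont := continuous_one_div_sq_add_sq hα.ne'
  rw [← integral_add_adjacent_intervals (hcont.intervalIntegrable c (-α))
    (hcont.intervalIntegrable _ x)]
  have hhead := integral_one_div_sq_add_sq_pos hα.ne' hc
  have htail : (x + α) / (2 * α ^ 2) - (-α + α) / (2 * α ^ 2) ≤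
      ∫ t in (-α)..x, 1 / (t ^ 2 + α ^ 2) :=
    sub_le_integral_one_div_sq_add_sq hα.ne' hx₀ (g := fun t => (t + α) / (2 * α ^ 2))
      (fun t => ((hasDerivAt_id' t).add_const α).div_const _)
      fun t ht => one_div_two_mul_sq_le_one_div_sq_add_sq hα.ne'
        (sq_le_sq' ht.1.le (by linarith [ht.2]))
  simp only [neg_add_cancel, zero_div, sub_zero] at htail
  linarith

lemma add_div_sq_add_sq_sub_lt_integral (hα : 0 < α) {c x : ℝ} (hc : c < -α) (hx : 0 ≤ x) :
    (x + α) / (x ^ 2 + α ^ 2) - 1 / (2 * α) < ∫ t in c..x, 1 / (t ^ 2 + α ^ 2) := by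
  have hcont := continuous_one_div_sq_add_sq hα.ne'
  rw [← integral_add_adjacent_intervals (hcont.intervalIntegrable c 0)
    (hcont.intervalIntegrable _ x)]
  have hhead := div_two_mul_sq_lt_integral hα hc (by linarith) le_rfl
  have htail := sub_le_integral_one_div_sq_add_sq hα.ne' hx (hasDerivAt_add_div_sq_add_sq hα.ne')
    fun t ht => deriv_add_div_sq_add_sq_le hα ht.1.le
  have hhead_eq : (0 + α) / (2 * α ^ 2) = 1 / (2 * α) := by
    rw [zero_add]
    field_simp
  have htail_eq : (0 + α) / (0 ^ 2 + α ^ 2) = 1 / (2 * α) + 1 / (2 * α) := by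
    field_simp
    ring
  linarith

end

theorem stmt_3 (α : ℝ) (hα : 0 < α) (f : ℝ → ℝ)
    (hf : ∀ x : ℝ, f x = ∫ t in (-α - Real.sqrt α)..x, 1 / (t ^ 2 + α ^ 2)) :
    (∀ x : ℝ, -α ≤ x → x ≤ 0 → (x + α) / (2 * α ^ 2) < f x) ∧
    (∀ x : ℝ, 0 ≤ x → x ≤ α → (x + α) / (x ^ 2 + α ^ 2) - 1 / (2 * α) < f x) := by
  have hc : -α - Real.sqrt α < -α := by linarith [Real.sqrt_pos.mpr hα]
  simp only [hf]
  exact ⟨fun x hx₀ hx₁ => div_two_mul_sq_lt_integral hα hc hx₀ hx₁,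
    fun x hx _ => add_div_sq_add_sq_sub_lt_integral hα hc hx⟩
end

section
/- (Conservation law for l = 0) Let ψ = ψ(v, r) be a smooth spherically symmetric solution of the extreme Reissner-Nordström wave equation D ∂_r^2ψ + 2∂_v∂_rψ + (2/r)∂_vψ + R ∂_rψ = 0, where D = (1 - M/r)^2 and R = D' + 2D/r. Then along the horizon r = M the quantity ∂_rψ + (1/M)ψ is independent of v. -/
theorem stmt_14 (M : ℝ) (hM : 0 < M) (D R : ℝ → ℝ)
    (hD : ∀ r : ℝ, D r = (1 - M / r) ^ 2)
    (hR : ∀ r : ℝ, R r = deriv D r + 2 * D r / r)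
    (ψ : ℝ → ℝ → ℝ)
    (hψ : ContDiff ℝ (⊤ : ℕ∞) (fun p : ℝ × ℝ => ψ p.1 p.2))
    (hwave : ∀ v r : ℝ, 0 < r →
      D r * deriv (deriv (ψ v)) r + 2 * deriv (fun w => deriv (ψ w) r) v +
        (2 / r) * deriv (fun w => ψ w r) v + R r * deriv (ψ v) r = 0) :
    ∀ v₁ v₂ : ℝ,
      deriv (ψ v₁) M + (1 / M) * ψ v₁ M = deriv (ψ v₂) M + (1 / M) * ψ v₂ M := by
  have hM' : M ≠ 0 := hM.ne'
  set F : ℝ × ℝ → ℝ := fun p => ψ p.1 p.2 with hF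
  have hDM : D M = 0 := by rw [hD]; field_simp; norm_num
  have hDfun : D = fun r : ℝ => (1 - M * r⁻¹) ^ 2 := by
    funext r; rw [hD, div_eq_mul_inv]
  have hDder : HasDerivAt D 0 M := by
    have h1 : HasDerivAt (fun r : ℝ => 1 - M * r⁻¹) (0 - M * (-(M ^ 2)⁻¹)) M :=
      (hasDerivAt_const M (1 : ℝ)).sub ((hasDerivAt_inv hM').const_mul M)
    have h2 := h1.pow 2
    rw [hDfun]
    refine h2.congr_deriv ?_
    have h0 : (1 : ℝ) - M * M⁻¹ = 0 := by field_simp; norm_num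
    rw [h0]; ring
  have hRM : R M = 0 := by
    rw [hR, hDder.deriv, hDM]; simp
  have hFd : Differentiable ℝ F := hψ.differentiable (by simp)
  have hpart : ∀ w r : ℝ, deriv (ψ w) r = fderiv ℝ F (w, r) (0, 1) := by
    intro w r
    have h2 : HasDerivAt (fun t : ℝ => ((w, t) : ℝ × ℝ)) (0, 1) r :=
      (hasDerivAt_const r w).prodMk (hasDerivAt_id r)
    have h1 : HasDerivAt (fun t => F (w, t)) (fderiv ℝ F (w, r) (0, 1)) r :=
      (hFd (w, r)).hasFDerivAt.comp_hasDerivAt r h2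
    exact h1.deriv
  set G : ℝ × ℝ → ℝ := fun p => fderiv ℝ F p (0, 1) with hG
  have hGsmooth : ContDiff ℝ (⊤ : ℕ∞) G :=
    (ContinuousLinearMap.apply ℝ ℝ ((0 : ℝ), (1 : ℝ))).contDiff.comp
      (hψ.fderiv_right (by simp))
  have hline : Differentiable ℝ (fun w : ℝ => ((w, M) : ℝ × ℝ)) :=
    differentiable_id.prodMk (differentiable_const M)
  have hG1 : Differentiable ℝ (fun w : ℝ => G (w, M)) :=
    (hGsmooth.differentiable (by simp)).comp hline
  have hF1 : Differentiable ℝ (fun w : ℝ => F (w, M)) := hFd.comp hline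
  set g : ℝ → ℝ := fun v => G (v, M) + (1 / M) * F (v, M) with hg
  have hgdiff : Differentiable ℝ g := hG1.add (hF1.const_mul _)
  have hgd : ∀ v, deriv g v = 0 := by
    intro v
    have hw := hwave v M hM
    rw [hDM, hRM] at hw
    have hA : (fun w => deriv (ψ w) M) = fun w => G (w, M) := by
      funext w; exact hpart w M
    rw [hA] at hw
    simp only [zero_mul, zero_add, add_zero] at hw
    have hderiv : deriv g v = deriv (fun w => G (w, M)) v
        + (1 / M) * deriv (fun w => F (w, M)) v := by
      rw [hg, deriv_fun_add (hG1 v) ((hF1 v).const_mul (1 / M)),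
        deriv_const_mul _ (hF1 v)]
    have hB : deriv (fun w => F (w, M)) v = deriv (fun w => ψ w M) v := rfl
    rw [hderiv, hB]
    have h2 : 2 * (deriv (fun w => G (w, M)) v
        + 1 / M * deriv (fun w => ψ w M) v) = 0 := by
      linear_combination hw
    linarith
  intro v₁ v₂
  have hconst := is_const_of_deriv_eq_zero hgdiff hgd v₁ v₂
  rw [hpart v₁ M, hpart v₂ M]
  simpa [hg, hG, hF] using hconst
end

section
/- (Conservation law for l = 1) Let ψ = ψ(v, r, ω) be a smooth solution of □_gψ = 0 on extreme Reissner-Nordström supported on the angular frequency l = 1 (so △̸ψ = -(2/r^2)ψ). Then along each null generator of the horizon r = M, the quantity ∂_r^2ψ + (3/M)∂_rψ + (1/M^2)ψ is independent of v. -/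
open Filter Topology

noncomputable def pd (w : ℝ × ℝ) (g : ℝ × ℝ → ℝ) (p : ℝ × ℝ) : ℝ := fderiv ℝ g p w

lemma pd_contDiff {g : ℝ × ℝ → ℝ} (hg : ContDiff ℝ (⊤ : ℕ∞) g) (w : ℝ × ℝ) :
    ContDiff ℝ (⊤ : ℕ∞) (pd w g) := by
  have h1 : ContDiff ℝ (⊤ : ℕ∞) (fderiv ℝ g) := hg.fderiv_right (by simp)
  exact (ContinuousLinearMap.apply ℝ ℝ w).contDiff.comp h1

lemma pd_hasDerivAt_r {g : ℝ × ℝ → ℝ} (hg : ContDiff ℝ (⊤ : ℕ∞) g) (v r : ℝ) :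
    HasDerivAt (fun r' => g (v, r')) (pd (0, 1) g (v, r)) r := by
  have hline : HasDerivAt (fun r' : ℝ => ((v, r') : ℝ × ℝ)) ((0 : ℝ), (1 : ℝ)) r :=
    (hasDerivAt_const r v).prodMk (hasDerivAt_id r)
  have hf : HasFDerivAt g (fderiv ℝ g (v, r)) (v, r) :=
    (hg.differentiable (by simp) (v, r)).hasFDerivAt
  exact hf.comp_hasDerivAt r hline

lemma pd_hasDerivAt_v {g : ℝ × ℝ → ℝ} (hg : ContDiff ℝ (⊤ : ℕ∞) g) (v r : ℝ) :
    HasDerivAt (fun w => g (w, r)) (pd (1, 0) g (v, r)) v := by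
  have hline : HasDerivAt (fun w : ℝ => ((w, r) : ℝ × ℝ)) ((1 : ℝ), (0 : ℝ)) v :=
    (hasDerivAt_id v).prodMk (hasDerivAt_const v r)
  have hf : HasFDerivAt g (fderiv ℝ g (v, r)) (v, r) :=
    (hg.differentiable (by simp) (v, r)).hasFDerivAt
  exact hf.comp_hasDerivAt v hline

lemma pd_pd_eq {g : ℝ × ℝ → ℝ} (hg : ContDiff ℝ (⊤ : ℕ∞) g) (w₁ w₂ : ℝ × ℝ) (p : ℝ × ℝ) :
    pd w₁ (pd w₂ g) p = fderiv ℝ (fderiv ℝ g) p w₁ w₂ := by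
  have h1 : ContDiff ℝ (⊤ : ℕ∞) (fderiv ℝ g) := hg.fderiv_right (by simp)
  have hL : pd w₂ g = (ContinuousLinearMap.apply ℝ ℝ w₂) ∘ (fderiv ℝ g) := rfl
  have := fderiv_comp p ((ContinuousLinearMap.apply ℝ ℝ w₂)).differentiableAt
    ((h1.differentiable (by simp)) p)
  simp only [pd, hL, this, ContinuousLinearMap.fderiv]
  rfl

lemma pd_comm {g : ℝ × ℝ → ℝ} (hg : ContDiff ℝ (⊤ : ℕ∞) g) (w₁ w₂ : ℝ × ℝ) (p : ℝ × ℝ) :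
    pd w₁ (pd w₂ g) p = pd w₂ (pd w₁ g) p := by
  rw [pd_pd_eq hg, pd_pd_eq hg]
  exact (hg.contDiffAt.isSymmSndFDerivAt (by rw [minSmoothness_of_isRCLikeNormedField]; exact WithTop.coe_le_coe.mpr (le_top : (2:ℕ∞) ≤ ⊤))).eq w₁ w₂

theorem stmt_15 (M : ℝ) (hM : 0 < M) (D R : ℝ → ℝ)
    (hD : ∀ r : ℝ, D r = (1 - M / r) ^ 2)
    (hR : ∀ r : ℝ, R r = deriv D r + 2 * D r / r)
    (ψ : ℝ → ℝ → ℝ)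
    (hψ : ContDiff ℝ (⊤ : ℕ∞) (fun p : ℝ × ℝ => ψ p.1 p.2))
    (hwave : ∀ v r : ℝ, 0 < r →
      D r * deriv (deriv (ψ v)) r + 2 * deriv (fun w => deriv (ψ w) r) v +
        (2 / r) * deriv (fun w => ψ w r) v + R r * deriv (ψ v) r
        - (2 / r ^ 2) * ψ v r = 0) :
    ∀ v₁ v₂ : ℝ,
      deriv (deriv (ψ v₁)) M + (3 / M) * deriv (ψ v₁) M + (1 / M ^ 2) * ψ v₁ M =
        deriv (deriv (ψ v₂)) M + (3 / M) * deriv (ψ v₂) M + (1 / M ^ 2) * ψ v₂ M := by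
  set f : ℝ × ℝ → ℝ := fun p => ψ p.1 p.2 with hfdef
  set g1 : ℝ × ℝ → ℝ := pd (0, 1) f with hg1def
  have hg1 : ContDiff ℝ (⊤ : ℕ∞) g1 := pd_contDiff hψ _
  set g2 : ℝ × ℝ → ℝ := pd (0, 1) g1 with hg2def
  have hg2 : ContDiff ℝ (⊤ : ℕ∞) g2 := pd_contDiff hg1 _
  have hg1v : ContDiff ℝ (⊤ : ℕ∞) (pd (1, 0) g1) := pd_contDiff hg1 _
  have hfv : ContDiff ℝ (⊤ : ℕ∞) (pd (1, 0) f) := pd_contDiff hψ _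
  -- rewriting derivatives of ψ as partial derivatives of f
  have h_dr : ∀ v r, deriv (ψ v) r = g1 (v, r) := fun v r =>
    (pd_hasDerivAt_r hψ v r).deriv
  have h_drfun : ∀ v, deriv (ψ v) = fun r => g1 (v, r) := fun v => funext (h_dr v)
  have h_ddr : ∀ v r, deriv (deriv (ψ v)) r = g2 (v, r) := by
    intro v r
    rw [h_drfun v]
    exact (pd_hasDerivAt_r hg1 v r).deriv
  have h_dv : ∀ v r, deriv (fun w => ψ w r) v = pd (1, 0) f (v, r) := fun v r =>
    (pd_hasDerivAt_v hψ v r).deriv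
  have h_dvr : ∀ v r, deriv (fun w => deriv (ψ w) r) v = pd (1, 0) g1 (v, r) := by
    intro v r
    have : (fun w => deriv (ψ w) r) = fun w => g1 (w, r) := funext fun w => h_dr w r
    rw [this]
    exact (pd_hasDerivAt_v hg1 v r).deriv
  -- the wave equation in pd form
  have hE : ∀ v r, 0 < r →
      D r * g2 (v, r) + 2 * pd (1, 0) g1 (v, r) + (2 / r) * pd (1, 0) f (v, r)
        + R r * g1 (v, r) - (2 / r ^ 2) * f (v, r) = 0 := by
    intro v r hr
    have := hwave v r hr
    rwa [h_ddr, h_dvr, h_dv, h_dr] at this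
  -- facts about D and R
  have hD' : ∀ r : ℝ, r ≠ 0 → HasDerivAt D (2 * M / r ^ 2 - 2 * M ^ 2 / r ^ 3) r := by
    intro r hr
    have hfun : D = fun x : ℝ => (1 - M / x) ^ 2 := funext hD
    have h1 : HasDerivAt (fun x : ℝ => 1 - M / x) (M / r ^ 2) r := by
      have := ((hasDerivAt_inv hr).const_mul M).const_sub 1
      refine this.congr_deriv ?_
      ring
    have h2 := h1.pow 2
    rw [hfun]
    refine h2.congr_deriv ?_
    norm_num
    field_simp
  have hDM : D M = 0 := by rw [hD M, div_self hM.ne']; ring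
  have hD'M : HasDerivAt D 0 M := by
    convert hD' M hM.ne' using 1
    field_simp
    ring
  have hRval : ∀ r : ℝ, r ≠ 0 → R r = 2 / r - 2 * M / r ^ 2 := by
    intro r hr
    rw [hR r, (hD' r hr).deriv, hD r]
    field_simp
    ring
  have hRM : R M = 0 := by
    rw [hRval M hM.ne']
    field_simp
    ring
  have h2r : HasDerivAt (fun r : ℝ => 2 / r) (-(2 / M ^ 2)) M := by
    have := (hasDerivAt_inv hM.ne').const_mul (2 : ℝ)
    refine this.congr_deriv ?_
    ring
  have h2r2 : HasDerivAt (fun r : ℝ => 2 / r ^ 2) (-(4 / M ^ 3)) M := by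
    have hpow : HasDerivAt (fun r : ℝ => r ^ 2) (2 * M ^ 1) M := by
      simpa using (hasDerivAt_pow 2 M)
    have := (hpow.inv (pow_ne_zero 2 hM.ne')).const_mul (2 : ℝ)
    refine this.congr_deriv ?_
    field_simp
    ring
  have hR'M : HasDerivAt R (2 / M ^ 2) M := by
    have a2 : HasDerivAt (fun r : ℝ => M * (2 / r ^ 2)) (M * -(4 / M ^ 3)) M :=
      h2r2.const_mul M
    have h2 := h2r.sub a2
    have h2' : HasDerivAt (fun r : ℝ => 2 / r - M * (2 / r ^ 2)) (2 / M ^ 2) M := by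
      refine h2.congr_deriv ?_
      field_simp
      ring
    apply h2'.congr_of_eventuallyEq
    filter_upwards [eventually_ne_nhds hM.ne'] with r hr
    rw [hRval r hr]
    ring
  -- relation I : the wave equation restricted to r = M
  have hI : ∀ v, 2 * pd (1, 0) g1 (v, M) + (2 / M) * pd (1, 0) f (v, M)
      - (2 / M ^ 2) * f (v, M) = 0 := by
    intro v
    have := hE v M hM
    rw [hDM, hRM] at this
    linarith
  -- relation II : the r-derivative of the wave equation at r = M
  have hII : ∀ v, 2 * pd (1, 0) g2 (v, M) + (2 / M) * pd (1, 0) g1 (v, M)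
      - (2 / M ^ 2) * pd (1, 0) f (v, M) + (4 / M ^ 3) * f (v, M) = 0 := by
    intro v
    have t1 : HasDerivAt (fun r => D r * g2 (v, r))
        (0 * g2 (v, M) + D M * pd (0, 1) g2 (v, M)) M :=
      hD'M.mul (pd_hasDerivAt_r hg2 v M)
    have t2 : HasDerivAt (fun r => 2 * pd (1, 0) g1 (v, r))
        (2 * pd (0, 1) (pd (1, 0) g1) (v, M)) M :=
      (pd_hasDerivAt_r hg1v v M).const_mul 2
    have t3 : HasDerivAt (fun r => (2 / r) * pd (1, 0) f (v, r))
        (-(2 / M ^ 2) * pd (1, 0) f (v, M) + (2 / M) * pd (0, 1) (pd (1, 0) f) (v, M)) M :=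
      h2r.mul (pd_hasDerivAt_r hfv v M)
    have t4 : HasDerivAt (fun r => R r * g1 (v, r))
        ((2 / M ^ 2) * g1 (v, M) + R M * pd (0, 1) g1 (v, M)) M :=
      hR'M.mul (pd_hasDerivAt_r hg1 v M)
    have t5 : HasDerivAt (fun r => (2 / r ^ 2) * f (v, r))
        (-(4 / M ^ 3) * f (v, M) + (2 / M ^ 2) * g1 (v, M)) M :=
      h2r2.mul (pd_hasDerivAt_r hψ v M)
    have tall := (((t1.add t2).add t3).add t4).sub t5
    have hzero : HasDerivAt (fun r =>
        D r * g2 (v, r) + 2 * pd (1, 0) g1 (v, r) + (2 / r) * pd (1, 0) f (v, r)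
          + R r * g1 (v, r) - (2 / r ^ 2) * f (v, r)) 0 M := by
      apply (hasDerivAt_const M (0 : ℝ)).congr_of_eventuallyEq
      filter_upwards [eventually_gt_nhds hM] with r hr
      exact hE v r hr
    have huniq := tall.unique hzero
    rw [hDM, hRM, pd_comm hg1 (0, 1) (1, 0), pd_comm hψ (0, 1) (1, 0)] at huniq
    rw [← hg2def, ← hg1def] at huniq
    linarith
  -- the conserved quantity
  have key : ∀ v₁ v₂ : ℝ, g2 (v₁, M) + (3 / M) * g1 (v₁, M) + (1 / M ^ 2) * f (v₁, M)
      = g2 (v₂, M) + (3 / M) * g1 (v₂, M) + (1 / M ^ 2) * f (v₂, M) := by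
    have hF : ∀ v, HasDerivAt
        (fun v => g2 (v, M) + (3 / M) * g1 (v, M) + (1 / M ^ 2) * f (v, M)) 0 v := by
      intro v
      have b1 := pd_hasDerivAt_v hg2 v M
      have b2 := (pd_hasDerivAt_v hg1 v M).const_mul (3 / M)
      have b3 := (pd_hasDerivAt_v hψ v M).const_mul (1 / M ^ 2)
      have hsum := (b1.add b2).add b3
      refine hsum.congr_deriv ?_
      linear_combination ((1 : ℝ) / 2) * hII v + (1 / M) * hI v
    intro v₁ v₂
    exact is_const_of_deriv_eq_zero (fun v => (hF v).differentiableAt)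
      (fun v => (hF v).deriv) v₁ v₂
  intro v₁ v₂
  rw [h_ddr, h_ddr, h_dr, h_dr]
  exact key v₁ v₂
end
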